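/- Let σ ∈ S_n and s_i a simple transposition such that either |σ^{-1}(i) - σ^{-1}(i+1)| > 1, or i = 1 and {σ(1), σ(2)} ≠ {1,2}. Then the exterior peak set of s_i σ equals the exterior peak set of σ. -/
import Mathlib


/-- The value of a permutation of `Fin n` at a natural-number position
(0-based); positions outside `[0,n)` are fixed. -/
def pval (n : ℕ) (σ : Equiv.Perm (Fin n)) (i : ℕ) : ℕ :=
  if h : i < n then (σ ⟨i, h⟩ : ℕ) else i

/-- The simple transposition `s_i` exchanging positions `i` and `i+1` (0-based). -/
def sT (n i : ℕ) (h : i + 1 < n) : Equiv.Perm (Fin n) :=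
  Equiv.swap ⟨i, Nat.lt_of_succ_lt h⟩ ⟨i + 1, h⟩

/-- The (0-based) descent set of a permutation: `{i ∈ [0,n-2] : σ(i) > σ(i+1)}`. -/
def Des (n : ℕ) (σ : Equiv.Perm (Fin n)) : Finset ℕ :=
  (Finset.range (n - 1)).filter fun i => pval n σ (i + 1) < pval n σ i

/-- The (0-based) exterior peak set, with the convention that the value just before
position `0` is smaller than every value:
`{i ∈ [0,n-2] : σ(i-1) < σ(i) > σ(i+1)}`. -/
def EPeak (n : ℕ) (σ : Equiv.Perm (Fin n)) : Finset ℕ :=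
  (Finset.range (n - 1)).filter fun i =>
    (i = 0 ∨ pval n σ (i - 1) < pval n σ i) ∧ pval n σ (i + 1) < pval n σ i

lemma pval_lt (n : ℕ) (σ : Equiv.Perm (Fin n)) {j : ℕ} (hj : j < n) :
    pval n σ j = (σ ⟨j, hj⟩ : ℕ) := dif_pos hj

lemma pval_lt_n (n : ℕ) (σ : Equiv.Perm (Fin n)) {j : ℕ} (hj : j < n) :
    pval n σ j < n := by rw [pval_lt n σ hj]; exact (σ ⟨j, hj⟩).isLt

lemma pval_inj (n : ℕ) (σ : Equiv.Perm (Fin n)) {j k : ℕ} (hj : j < n) (hk : k < n)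
    (hh : pval n σ j = pval n σ k) : j = k := by
  rw [pval_lt n σ hj, pval_lt n σ hk] at hh
  have := σ.injective (Fin.ext hh)
  simpa using congrArg Fin.val this

lemma pval_inv (n : ℕ) (σ : Equiv.Perm (Fin n)) {j v : ℕ} (hj : j < n) (hv : v < n) :
    pval n σ j = v ↔ pval n σ⁻¹ v = j := by
  rw [pval_lt n σ hj, pval_lt n σ⁻¹ hv]
  constructor
  · intro h'
    have hσ : σ ⟨j, hj⟩ = ⟨v, hv⟩ := Fin.ext h'
    rw [← hσ]; simp
  · intro h'
    have hσ : σ⁻¹ ⟨v, hv⟩ = ⟨j, hj⟩ := Fin.ext h'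
    rw [← hσ]; simp

lemma pval_sT_mul (n i : ℕ) (h : i + 1 < n) (σ : Equiv.Perm (Fin n)) (j : ℕ) :
    pval n (sT n i h * σ) j =
      if pval n σ j = i then i + 1 else if pval n σ j = i + 1 then i else pval n σ j := by
  unfold pval sT
  by_cases hj : j < n
  · simp only [dif_pos hj, Equiv.Perm.mul_apply, Equiv.swap_apply_def]
    rw [apply_ite Fin.val, apply_ite Fin.val]
    simp [Fin.ext_iff]
  · simp only [dif_neg hj]
    split_ifs <;> omega

lemma pval_lt_iff (n i : ℕ) (h : i + 1 < n) (σ : Equiv.Perm (Fin n)) {a b : ℕ}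
    (h1 : ¬(pval n σ a = i ∧ pval n σ b = i + 1))
    (h2 : ¬(pval n σ b = i ∧ pval n σ a = i + 1)) :
    (pval n (sT n i h * σ) a < pval n (sT n i h * σ) b ↔ pval n σ a < pval n σ b) := by
  rw [pval_sT_mul, pval_sT_mul]
  split_ifs <;> omega

/-- If no adjacent pair of positions carries the values `i, i+1` (in either order),
then multiplying on the left by `sT n i h` does not change the exterior peak set. -/
lemma aux_far (n i : ℕ) (h : i + 1 < n) (σ : Equiv.Perm (Fin n))
    (hd : ∀ a, a + 1 < n →
      ¬(pval n σ a = i ∧ pval n σ (a + 1) = i + 1) ∧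
      ¬(pval n σ (a + 1) = i ∧ pval n σ a = i + 1)) :
    EPeak n (sT n i h * σ) = EPeak n σ := by
  unfold EPeak
  refine Finset.filter_congr ?_
  intro j hj
  simp only [Finset.mem_range] at hj
  have hjn : j + 1 < n := by omega
  have h2 : pval n (sT n i h * σ) (j + 1) < pval n (sT n i h * σ) j ↔
      pval n σ (j + 1) < pval n σ j :=
    pval_lt_iff n i h σ (hd j hjn).2
      (fun hx => (hd j hjn).1 ⟨hx.1, hx.2⟩)
  rcases Nat.eq_zero_or_pos j with rfl | hjpos
  · simp [h2]
  · have hj1 : j - 1 + 1 = j := by omega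
    have hd' := hd (j - 1) (by omega)
    rw [hj1] at hd'
    have h1 : pval n (sT n i h * σ) (j - 1) < pval n (sT n i h * σ) j ↔
        pval n σ (j - 1) < pval n σ j :=
      pval_lt_iff n i h σ hd'.1 (fun hx => hd'.2 ⟨hx.1, hx.2⟩)
    rw [h1, h2]

/-- If `|σ⁻¹(i) - σ⁻¹(i+1)| > 1`, or `i` is the first position and the first two
values of `σ` are not (in some order) the two smallest values, then `s_i σ` and `σ`
have the same exterior peak set. -/
theorem ePeak_mul_swap (n i : ℕ) (h : i + 1 < n) (σ : Equiv.Perm (Fin n))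
    (hc : 1 < Nat.dist (pval n σ⁻¹ i) (pval n σ⁻¹ (i + 1)) ∨
      (i = 0 ∧ ({pval n σ 0, pval n σ 1} : Set ℕ) ≠ {0, 1})) :
    EPeak n (sT n i h * σ) = EPeak n σ := by
  have hin : i < n := by omega
  rcases hc with hd | ⟨rfl, hne⟩
  · apply aux_far
    intro a ha
    constructor
    · rintro ⟨h1, h2⟩
      rw [pval_inv n σ (by omega) hin] at h1
      rw [pval_inv n σ ha h] at h2
      rw [h1, h2] at hd
      unfold Nat.dist at hd; omega
    · rintro ⟨h1, h2⟩
      rw [pval_inv n σ ha hin] at h1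
      rw [pval_inv n σ (by omega) h] at h2
      rw [h1, h2] at hd
      unfold Nat.dist at hd; omega
  · -- i = 0 case
    set p := pval n σ⁻¹ 0 with hpdef
    set q := pval n σ⁻¹ 1 with hqdef
    have hp : p < n := pval_lt_n n σ⁻¹ (by omega)
    have hq : q < n := pval_lt_n n σ⁻¹ h
    have h0 : pval n σ p = 0 := (pval_inv n σ hp (by omega)).mpr rfl
    have h1v : pval n σ q = 1 := (pval_inv n σ hq h).mpr rfl
    have hpq : p ≠ q := by
      intro e
      rw [e, h1v] at h0
      omega
    by_cases hfar : 1 < Nat.dist p q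
    · apply aux_far
      intro a ha
      constructor
      · rintro ⟨e1, e2⟩
        rw [pval_inv n σ (by omega) (by omega)] at e1
        rw [pval_inv n σ ha h] at e2
        rw [← hpdef, ← hqdef] at *
        rw [e1, e2] at hfar
        unfold Nat.dist at hfar; omega
      · rintro ⟨e1, e2⟩
        rw [pval_inv n σ ha (by omega)] at e1
        rw [pval_inv n σ (by omega) h] at e2
        rw [← hpdef, ← hqdef] at *
        rw [e1, e2] at hfar
        unfold Nat.dist at hfar; omega
    · obtain ⟨a, han, hval⟩ : ∃ a, a + 1 < n ∧
          ((pval n σ a = 0 ∧ pval n σ (a + 1) = 1) ∨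
           (pval n σ a = 1 ∧ pval n σ (a + 1) = 0)) := by
        rcases (show q = p + 1 ∨ p = q + 1 by unfold Nat.dist at hfar; omega) with e | e
        · exact ⟨p, by omega, Or.inl ⟨h0, by rw [← e]; exact h1v⟩⟩
        · exact ⟨q, by omega, Or.inr ⟨h1v, by rw [← e]; exact h0⟩⟩
      have ha0 : a ≠ 0 := by
        rintro rfl
        apply hne
        rcases hval with ⟨x0, x1⟩ | ⟨x0, x1⟩
        · rw [x0, x1]
        · rw [x0, x1]; exact Set.pair_comm 1 0
      have hval0 : ∀ x, x < n → pval n σ x = 0 → x = a ∨ x = a + 1 := by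
        intro x hx e
        rcases hval with ⟨x0, _⟩ | ⟨_, x1⟩
        · exact Or.inl (pval_inj n σ hx (by omega) (e.trans x0.symm))
        · exact Or.inr (pval_inj n σ hx han (e.trans x1.symm))
      have hval1 : ∀ x, x < n → pval n σ x = 1 → x = a ∨ x = a + 1 := by
        intro x hx e
        rcases hval with ⟨_, x1⟩ | ⟨x0, _⟩
        · exact Or.inr (pval_inj n σ hx han (e.trans x1.symm))
        · exact Or.inl (pval_inj n σ hx (by omega) (e.trans x0.symm))
      have hpair : ∀ x, x + 1 < n → x ≠ a →
          ¬(pval n σ x = 0 ∧ pval n σ (x + 1) = 1) ∧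
          ¬(pval n σ x = 1 ∧ pval n σ (x + 1) = 0) := by
        intro x hx hxa
        constructor
        · rintro ⟨e0, e1⟩
          rcases hval0 x (by omega) e0 with h' | h'
          · exact hxa h'
          · subst h'
            rcases hval1 (a + 1 + 1) (by omega) e1 with h' | h' <;> omega
        · rintro ⟨e0, e1⟩
          rcases hval0 (x + 1) (by omega) e1 with h' | h'
          · rcases hval1 x (by omega) e0 with h'' | h'' <;> omega
          · omega
      unfold EPeak
      refine Finset.filter_congr ?_
      intro j hj
      simp only [Finset.mem_range] at hj
      have hjn : j + 1 < n := by omega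
      rcases eq_or_ne j a with rfl | hja
      · -- j = a : both predicates false (first conjunct)
        have hma : 2 ≤ pval n σ (j - 1) := by
          have e0 : pval n σ (j - 1) ≠ 0 := by
            intro e; rcases hval0 (j - 1) (by omega) e with h' | h' <;> omega
          have e1 : pval n σ (j - 1) ≠ 1 := by
            intro e; rcases hval1 (j - 1) (by omega) e with h' | h' <;> omega
          omega
        have key : pval n σ j ≤ 1 := by rcases hval with ⟨x, _⟩ | ⟨x, _⟩ <;> omega
        have e1 : pval n (sT n 0 h * σ) (j - 1) = pval n σ (j - 1) := by
          rw [pval_sT_mul]; split_ifs <;> omega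
        have e2 : pval n (sT n 0 h * σ) j ≤ 1 := by
          rw [pval_sT_mul]; split_ifs <;> omega
        constructor
        · rintro ⟨ha00 | hlt, -⟩
          · exact absurd ha00 ha0
          · rw [e1] at hlt; omega
        · rintro ⟨ha00 | hlt, -⟩
          · exact absurd ha00 ha0
          · omega
      rcases eq_or_ne j (a + 1) with rfl | hja1
      · -- j = a + 1 : both predicates false (second conjunct)
        have hm2 : 2 ≤ pval n σ (a + 1 + 1) := by
          have e0 : pval n σ (a + 1 + 1) ≠ 0 := by
            intro e; rcases hval0 (a + 1 + 1) (by omega) e with h' | h' <;> omega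
          have e1 : pval n σ (a + 1 + 1) ≠ 1 := by
            intro e; rcases hval1 (a + 1 + 1) (by omega) e with h' | h' <;> omega
          omega
        have key : pval n σ (a + 1) ≤ 1 := by rcases hval with ⟨_, x⟩ | ⟨_, x⟩ <;> omega
        have e2 : pval n (sT n 0 h * σ) (a + 1) ≤ 1 := by
          rw [pval_sT_mul]; split_ifs <;> omega
        have e3 : pval n (sT n 0 h * σ) (a + 1 + 1) = pval n σ (a + 1 + 1) := by
          rw [pval_sT_mul]; split_ifs <;> omega
        constructor
        · rintro ⟨-, hlt⟩
          rw [e3] at hlt; omega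
        · rintro ⟨-, hlt⟩
          omega
      · -- generic j
        have hp2 := hpair j hjn hja
        have h2 : pval n (sT n 0 h * σ) (j + 1) < pval n (sT n 0 h * σ) j ↔
            pval n σ (j + 1) < pval n σ j :=
          pval_lt_iff n 0 h σ
            (fun ⟨x, y⟩ => hp2.2 ⟨by omega, by omega⟩)
            (fun ⟨x, y⟩ => hp2.1 ⟨by omega, by omega⟩)
        rcases Nat.eq_zero_or_pos j with rfl | hjpos
        · simp [h2]
        · have hj1 : j - 1 + 1 = j := by omega
          have hp1 := hpair (j - 1) (by omega) (by omega)
          rw [hj1] at hp1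
          have hh1 : pval n (sT n 0 h * σ) (j - 1) < pval n (sT n 0 h * σ) j ↔
              pval n σ (j - 1) < pval n σ j :=
            pval_lt_iff n 0 h σ
              (fun ⟨x, y⟩ => hp1.1 ⟨by omega, by omega⟩)
              (fun ⟨x, y⟩ => hp1.2 ⟨by omega, by omega⟩)
          rw [hh1, h2]
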